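/- If f ∈ ℚ[x] is p^r-Dumas (i.e., pure at p of slope −r/deg f with gcd(r, deg f) = 1), then the second iterate f ∘ f is irreducible over ℚ. -/

import Mathlib

open Polynomial

/-- `f ∈ ℚ[x]` is `p^r`-Dumas: its `p`-adic Newton polygon is a single segment from
`(0, r)` to `(deg f, 0)` (slope `-r/deg f`) and `gcd(r, deg f) = 1`. -/
def IsDumas (p r : ℕ) (f : Polynomial ℚ) : Prop :=
  1 ≤ f.natDegree ∧ Nat.Coprime r f.natDegree ∧
  f.coeff 0 ≠ 0 ∧ padicValRat p (f.coeff 0) = (r : ℤ) ∧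
  padicValRat p f.leadingCoeff = 0 ∧
  ∀ i ≤ f.natDegree, f.coeff i ≠ 0 →
    (r : ℝ) * (1 - (i : ℝ) / (f.natDegree : ℝ)) ≤ (padicValRat p (f.coeff i) : ℝ)

/-- The `n`-th iterate `f ∘ ⋯ ∘ f` of a polynomial (with `polyIter f 0 = X`). -/
noncomputable def polyIter {R : Type*} [CommSemiring R] (f : Polynomial R) : ℕ → Polynomial R
  | 0 => Polynomial.X
  | n + 1 => f.comp (polyIter f n)

/-!
Let `|·|` be the `p`-adic absolute value and, for `f = ∑ aₖ xᵏ` of degree `n`, take the Gauss norm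
`‖f‖_ρ = maxₖ |aₖ| ρᵏ` at the radius `ρ = p^(-r/n)`. Being `p^r`-pure says exactly that
`‖f‖_ρ = p^(-r)`, attained both at `a₀` and at `aₙ`. The Gauss norm is multiplicative, so in a
factorisation `f = g h` the norm of `g` is again attained at both ends of `g`; comparing them gives
`|g₀| = |g_s| ρ^s`, whence `n ∣ r s`, and coprimality forces `s ∈ {0, n}` (Eisenstein–Dumas).

For `n ≥ 2` the polynomial `f ∘ f` is again `p^r`-Dumas: at the radius `ρ^(1/n)` the norm of `f`
is at most `ρ`, so the norm of `f ∘ f` there is at most `‖f‖_ρ = p^(-r)`; and its constant term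
`f(a₀)` has absolute value `|a₀|` because `|a₀| = ρⁿ < ρ`.
-/

namespace Polynomial

variable {R : Type*} [CommRing R] {v : AbsoluteValue R ℝ} {c c' : ℝ}

theorem gaussNorm_le_of_forall_le {f : R[X]} {M : ℝ} (hM : 0 ≤ M)
    (h : ∀ i, v (f.coeff i) * c ^ i ≤ M) : f.gaussNorm v c ≤ M := by
  unfold gaussNorm
  split_ifs
  · exact Finset.sup'_le _ _ fun i _ => h i
  · exact hM

theorem gaussNorm_mono (f : R[X]) (hc : 0 ≤ c) (hcc' : c ≤ c') :
    f.gaussNorm v c ≤ f.gaussNorm v c' :=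
  gaussNorm_le_of_forall_le (f.gaussNorm_nonneg v (hc.trans hcc')) fun i =>
    (mul_le_mul_of_nonneg_left (pow_le_pow_left₀ hc hcc' i) (v.nonneg _)).trans
      (f.le_gaussNorm v (hc.trans hcc') i)

theorem gaussNorm_comp_le [Nontrivial R] (hna : IsNonarchimedean v) (hc : 0 < c) (g h : R[X]) :
    (g.comp h).gaussNorm v c ≤ g.gaussNorm v (h.gaussNorm v c) := by
  have := gaussNorm_isAbsoluteValue hna hc (R := R)
  rcases g.support.eq_empty_or_nonempty with hg | hg
  · simp [support_eq_empty.mp hg]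
  rw [comp_eq_sum_left, Polynomial.sum_def]
  refine ((isNonarchimedean_gaussNorm v hna hc.le).apply_sum_le_sup hg).trans ?_
  refine Finset.sup'_le _ _ fun i _ => ?_
  calc (C (g.coeff i) * h ^ i).gaussNorm v c = v (g.coeff i) * h.gaussNorm v c ^ i := by
        rw [gaussNorm_mul hna hc, gaussNorm_C, ← IsAbsoluteValue.abv_pow (gaussNorm v c)]
    _ ≤ g.gaussNorm v (h.gaussNorm v c) := g.le_gaussNorm v (h.gaussNorm_nonneg v hc.le) i

theorem gaussNorm_le_pow_of_gaussNorm_pow_le {f : R[X]} {d : ℝ} {n : ℕ} (hd0 : 0 < d)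
    (hd1 : d ≤ 1) (hdeg : f.natDegree ≤ n) (h : f.gaussNorm v (d ^ n) ≤ (d ^ n) ^ n) :
    f.gaussNorm v d ≤ d ^ n := by
  refine gaussNorm_le_of_forall_le (by positivity) fun i => ?_
  rcases lt_or_ge n i with hi | hi
  · simp [coeff_eq_zero_of_natDegree_lt (hdeg.trans_lt hi), hd0.le]
  have hcoeff : v (f.coeff i) ≤ (d ^ n) ^ (n - i) := by
    refine le_of_mul_le_mul_right ?_ (pow_pos (pow_pos hd0 n) i)
    rw [← pow_add, Nat.sub_add_cancel hi]
    exact (f.le_gaussNorm v (by positivity) i).trans h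
  have hexp : n - i ≤ n * (n - i) := by
    rcases n.eq_zero_or_pos with rfl | hn
    · simp
    · exact Nat.le_mul_of_pos_left _ hn
  calc v (f.coeff i) * d ^ i ≤ d ^ (n - i) * d ^ i := by
        gcongr
        exact hcoeff.trans (by rw [← pow_mul]; exact pow_le_pow_of_le_one hd0.le hd1 hexp)
    _ = d ^ n := by rw [← pow_add, Nat.sub_add_cancel hi]

theorem gaussNorm_comp_self_le [Nontrivial R] (hna : IsNonarchimedean v) {f : R[X]} {d : ℝ}
    {n : ℕ} (hd0 : 0 < d) (hd1 : d ≤ 1) (hdeg : f.natDegree ≤ n)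
    (h : f.gaussNorm v (d ^ n) ≤ (d ^ n) ^ n) :
    (f.comp f).gaussNorm v d ≤ (d ^ n) ^ n :=
  calc (f.comp f).gaussNorm v d ≤ f.gaussNorm v (f.gaussNorm v d) := gaussNorm_comp_le hna hd0 f f
    _ ≤ f.gaussNorm v (d ^ n) := gaussNorm_mono f (f.gaussNorm_nonneg v hd0.le)
          (gaussNorm_le_pow_of_gaussNorm_pow_le hd0 hd1 hdeg h)
    _ ≤ (d ^ n) ^ n := h

theorem abv_eval_eq_abv_coeff_zero (hna : IsNonarchimedean v) {f : R[X]} {x : R}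
    (hf : f.gaussNorm v c ≤ v (f.coeff 0)) (hf0 : f.coeff 0 ≠ 0) (hx : v x < c) :
    v (f.eval x) = v (f.coeff 0) := by
  have : Nontrivial R := ⟨⟨_, 0, hf0⟩⟩
  rw [eval_eq_sum_range]
  convert hna.apply_sum_eq_of_lt (fun a => (v.map_neg a).symm) (k := 0)
    (s := Finset.range (f.natDegree + 1)) (by simp) (l := fun i => f.coeff i * x ^ i)
    fun j _ hj => ?_ using 1
  · simp
  simp only [pow_zero, mul_one, map_mul, v.map_pow]
  rcases eq_or_ne (f.coeff j) 0 with h | h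
  · simpa [h] using v.pos hf0
  calc v (f.coeff j) * v x ^ j < v (f.coeff j) * c ^ j :=
        mul_lt_mul_of_pos_left (pow_lt_pow_left₀ hx (v.nonneg x) hj) (v.pos h)
    _ ≤ f.gaussNorm v c := f.le_gaussNorm v ((v.nonneg x).trans hx.le) j
    _ ≤ v (f.coeff 0) := hf

theorem gaussNorm_eq_of_gaussNorm_mul_eq (hna : IsNonarchimedean v) (hc : 0 < c) {g h : R[X]}
    {i j : ℕ} (hg : g.coeff i ≠ 0) (hh : h.coeff j ≠ 0)
    (hgh : (g * h).gaussNorm v c = v (g.coeff i) * c ^ i * (v (h.coeff j) * c ^ j)) :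
    g.gaussNorm v c = v (g.coeff i) * c ^ i := by
  have hhj : 0 < v (h.coeff j) * c ^ j := mul_pos (v.pos hh) (pow_pos hc j)
  rw [gaussNorm_mul hna hc] at hgh
  exact ((mul_eq_mul_iff_eq_and_eq_of_pos (g.le_gaussNorm v hc.le i)
    (h.le_gaussNorm v hc.le j) (mul_pos (v.pos hg) (pow_pos hc i))
    (hhj.trans_le (h.le_gaussNorm v hc.le j))).mp hgh.symm).1.symm

end Polynomial

open Rat.AbsoluteValue

noncomputable def dumasRadius (p r n : ℕ) : ℝ := (p : ℝ) ^ (-(r : ℝ) / n)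

theorem dumasRadius_mul_pow (p r m : ℕ) {n : ℕ} (hn : n ≠ 0) :
    dumasRadius p r (m * n) ^ n = dumasRadius p r m := by
  rw [dumasRadius, dumasRadius, ← Real.rpow_mul_natCast (by positivity)]
  congr 1
  push_cast
  field_simp

theorem dumasRadius_pow (p r : ℕ) {n : ℕ} (hn : n ≠ 0) :
    dumasRadius p r n ^ n = (p : ℝ) ^ (-(r : ℝ)) := by
  simpa [dumasRadius] using dumasRadius_mul_pow p r 1 hn

section Padic

variable {p : ℕ} [Fact p.Prime]

theorem one_lt_prime_cast : (1 : ℝ) < p := by exact_mod_cast (Fact.out : p.Prime).one_lt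

theorem prime_cast_pos : (0 : ℝ) < p := zero_lt_one.trans one_lt_prime_cast

theorem isNonarchimedean_padic : IsNonarchimedean (padic p) := fun a b => by
  simp only [padic_eq_padicNorm]
  exact_mod_cast padicNorm.nonarchimedean

theorem padic_eq_rpow {q : ℚ} (hq : q ≠ 0) :
    padic p q = (p : ℝ) ^ (-(padicValRat p q : ℝ)) := by
  rw [padic_eq_padicNorm, padicNorm.eq_zpow_of_nonzero hq, ← Int.cast_neg, Real.rpow_intCast]
  push_cast
  rfl

theorem dumasRadius_pos (r n : ℕ) : 0 < dumasRadius p r n :=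
  Real.rpow_pos_of_pos prime_cast_pos _

theorem dumasRadius_lt_one {r n : ℕ} (hr : r ≠ 0) (hn : n ≠ 0) : dumasRadius p r n < 1 :=
  Real.rpow_lt_one_of_one_lt_of_neg one_lt_prime_cast
    (div_neg_of_neg_of_pos (by simpa [pos_iff_ne_zero] using hr) (by positivity))

theorem padic_mul_dumasRadius_pow_le_iff {b : ℚ} (hb : b ≠ 0) (r n k : ℕ) :
    padic p b * dumasRadius p r n ^ k ≤ (p : ℝ) ^ (-(r : ℝ)) ↔
      (r : ℝ) * (1 - k / n) ≤ padicValRat p b := by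
  rw [padic_eq_rpow hb, dumasRadius, ← Real.rpow_mul_natCast (by positivity),
    ← Real.rpow_add prime_cast_pos, Real.rpow_le_rpow_left_iff one_lt_prime_cast]
  constructor <;> intro h <;> linarith [show (-(r : ℝ) / n) * k = -(r * (k / n)) by ring]

theorem dvd_mul_of_padic_eq_mul_dumasRadius_pow {a b : ℚ} (ha : a ≠ 0) (hb : b ≠ 0)
    {r n s : ℕ} (hn : n ≠ 0) (h : padic p a = padic p b * dumasRadius p r n ^ s) :
    n ∣ r * s := by
  rw [padic_eq_rpow ha, padic_eq_rpow hb, dumasRadius, ← Real.rpow_mul_natCast (by positivity),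
    ← Real.rpow_add prime_cast_pos,
    Real.rpow_right_inj prime_cast_pos one_lt_prime_cast.ne'] at h
  have : ((r * s : ℕ) : ℤ) = n * (padicValRat p a - padicValRat p b) := by
    have : (r : ℝ) * s = n * (padicValRat p a - padicValRat p b) := by
      field_simp at h
      linarith
    exact_mod_cast this
  exact Int.natCast_dvd_natCast.mp ⟨_, this⟩

theorem isDumas_iff_gaussNorm {r : ℕ} {f : ℚ[X]} :
    IsDumas p r f ↔ 1 ≤ f.natDegree ∧ r.Coprime f.natDegree ∧
      padic p (f.coeff 0) = (p : ℝ) ^ (-(r : ℝ)) ∧ padic p f.leadingCoeff = 1 ∧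
      f.gaussNorm (padic p) (dumasRadius p r f.natDegree) ≤ (p : ℝ) ^ (-(r : ℝ)) := by
  have hd := (dumasRadius_pos (p := p) r f.natDegree).le
  constructor
  · rintro ⟨hn, hcop, hf0, hv0, hlc, hpure⟩
    have hlc0 : f.leadingCoeff ≠ 0 := leadingCoeff_ne_zero.mpr (fun h => hf0 (by simp [h]))
    refine ⟨hn, hcop, by simp [padic_eq_rpow hf0, hv0], by simp [padic_eq_rpow hlc0, hlc],
      gaussNorm_le_of_forall_le (Real.rpow_nonneg prime_cast_pos.le _) fun i => ?_⟩
    by_cases hi : f.coeff i = 0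
    · simp [hi]
    · exact (padic_mul_dumasRadius_pow_le_iff hi r _ i).mpr
        (hpure i (le_natDegree_of_ne_zero hi) hi)
  · rintro ⟨hn, hcop, hf0, hlc, hN⟩
    have hf0' : f.coeff 0 ≠ 0 := by
      intro h
      rw [h, map_zero] at hf0
      exact (Real.rpow_pos_of_pos prime_cast_pos _).ne hf0
    have hlc0 : f.leadingCoeff ≠ 0 := leadingCoeff_ne_zero.mpr (fun h => hf0' (by simp [h]))
    refine ⟨hn, hcop, hf0', ?_, ?_, fun i _ hi => (padic_mul_dumasRadius_pow_le_iff hi r _ i).mp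
      ((f.le_gaussNorm _ hd i).trans hN)⟩
    · rw [padic_eq_rpow hf0', Real.rpow_right_inj prime_cast_pos one_lt_prime_cast.ne'] at hf0
      exact_mod_cast neg_injective hf0
    · rw [padic_eq_rpow hlc0, ← Real.rpow_zero (p : ℝ),
        Real.rpow_right_inj prime_cast_pos one_lt_prime_cast.ne'] at hlc
      exact_mod_cast neg_eq_zero.mp hlc

theorem IsDumas.natDegree_dvd_mul_natDegree {r : ℕ} {f g h : ℚ[X]} (hf : IsDumas p r f)
    (hgh : g * h = f) : f.natDegree ∣ r * g.natDegree := by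
  have hf0 : f.coeff 0 ≠ 0 := hf.2.2.1
  obtain ⟨hn, -, hf0v, hlc, hN⟩ := isDumas_iff_gaussNorm.mp hf
  have hd := dumasRadius_pos (p := p) r f.natDegree
  have hfg0 : f ≠ 0 := fun h0 => hf0 (by simp [h0])
  have hg : g ≠ 0 := left_ne_zero_of_mul (hgh ▸ hfg0)
  have hh : h ≠ 0 := right_ne_zero_of_mul (hgh ▸ hfg0)
  have hcoeff0 : f.coeff 0 = g.coeff 0 * h.coeff 0 := by rw [← hgh, mul_coeff_zero]
  obtain ⟨hg0, hh0⟩ : g.coeff 0 ≠ 0 ∧ h.coeff 0 ≠ 0 := mul_ne_zero_iff.mp (hcoeff0 ▸ hf0)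
  have hNf : f.gaussNorm (padic p) (dumasRadius p r f.natDegree) = padic p (f.coeff 0) :=
    le_antisymm (hN.trans hf0v.ge) (by simpa using f.le_gaussNorm (padic p) hd.le 0)
  have hbot := gaussNorm_eq_of_gaussNorm_mul_eq (isNonarchimedean_padic (p := p)) hd
    (i := 0) (j := 0) hg0 hh0 (by rw [hgh, hNf, hcoeff0, map_mul, pow_zero, mul_one, mul_one])
  rw [pow_zero, mul_one] at hbot
  have htop : g.gaussNorm (padic p) (dumasRadius p r f.natDegree) =
      padic p g.leadingCoeff * dumasRadius p r f.natDegree ^ g.natDegree := by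
    refine gaussNorm_eq_of_gaussNorm_mul_eq (isNonarchimedean_padic (p := p)) hd
      (g := g) (h := h) (i := g.natDegree) (j := h.natDegree) (by simpa using hg)
      (by simpa using hh) ?_
    rw [coeff_natDegree, coeff_natDegree, mul_mul_mul_comm, ← map_mul, ← leadingCoeff_mul,
      ← pow_add, ← natDegree_mul hg hh, hgh, hlc, one_mul, dumasRadius_pow _ _ (by omega), hNf,
      hf0v]
  exact dvd_mul_of_padic_eq_mul_dumasRadius_pow hg0 (by simpa using hg) (by omega)
    (hbot.symm.trans htop)

theorem IsDumas.irreducible {r : ℕ} {f : ℚ[X]} (hf : IsDumas p r f) : Irreducible f := by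
  refine ⟨not_isUnit_of_natDegree_pos _ hf.1, fun g h hgh => ?_⟩
  have hfg0 : f ≠ 0 := by rintro rfl; simpa using hf.1
  have hg : g ≠ 0 := left_ne_zero_of_mul (hgh ▸ hfg0)
  have hh : h ≠ 0 := right_ne_zero_of_mul (hgh ▸ hfg0)
  have hdeg : g.natDegree + h.natDegree = f.natDegree := by rw [hgh, natDegree_mul hg hh]
  have hdvd : f.natDegree ∣ g.natDegree :=
    hf.2.1.symm.dvd_of_dvd_mul_left (hf.natDegree_dvd_mul_natDegree hgh.symm)
  rcases Nat.eq_zero_or_pos g.natDegree with hg0 | hg0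
  · exact .inl (isUnit_iff_degree_eq_zero.mpr (by rw [degree_eq_natDegree hg, hg0]; rfl))
  · have := Nat.le_of_dvd hg0 hdvd
    exact .inr (isUnit_iff_degree_eq_zero.mpr (by rw [degree_eq_natDegree hh]; norm_cast; omega))

theorem IsDumas.comp_self {r : ℕ} {f : ℚ[X]} (hf : IsDumas p r f) (h2 : 2 ≤ f.natDegree) :
    IsDumas p r (f.comp f) := by
  have hf0 : f.coeff 0 ≠ 0 := hf.2.2.1
  obtain ⟨hn, hcop, hf0v, hlc, hN⟩ := isDumas_iff_gaussNorm.mp hf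
  have hr : r ≠ 0 := by
    rintro rfl
    rw [Nat.coprime_zero_left] at hcop
    omega
  have hpow := dumasRadius_mul_pow p r f.natDegree (n := f.natDegree) (by omega)
  have hsmall : padic p (f.coeff 0) < dumasRadius p r f.natDegree := by
    rw [hf0v, ← dumasRadius_pow p r (by omega : f.natDegree ≠ 0)]
    exact pow_lt_self_of_lt_one₀ (dumasRadius_pos r _) (dumasRadius_lt_one hr (by omega))
      (by omega)
  rw [isDumas_iff_gaussNorm, natDegree_comp]
  refine ⟨Nat.one_le_iff_ne_zero.mpr (by positivity), hcop.mul_right hcop, ?_, ?_, ?_⟩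
  · rw [coeff_zero_eq_eval_zero, eval_comp, ← coeff_zero_eq_eval_zero,
      abv_eval_eq_abv_coeff_zero isNonarchimedean_padic (hN.trans hf0v.ge) hf0 hsmall, hf0v]
  · rw [leadingCoeff_comp (by omega), map_mul, map_pow, hlc, one_pow, one_mul]
  · have hd' := dumasRadius_pos (p := p) r (f.natDegree * f.natDegree)
    have := gaussNorm_comp_self_le (isNonarchimedean_padic (p := p)) hd'
      (dumasRadius_lt_one (p := p) hr (by positivity)).le (le_refl f.natDegree)
    rw [hpow, dumasRadius_pow p r (by omega)] at this
    exact this hN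

end Padic

theorem dumas_comp_self_irreducible_general (p r : ℕ) (hp : p.Prime)
    (f : Polynomial ℚ) (hf : IsDumas p r f) :
    Irreducible (f.comp f) := by
  have : Fact p.Prime := ⟨hp⟩
  rcases Nat.lt_or_ge f.natDegree 2 with hlin | h2
  · have hf1 : f.natDegree = 1 := by have := hf.1; omega
    refine irreducible_of_degree_eq_one ((degree_eq_iff_natDegree_eq_of_pos one_pos).mpr ?_)
    rw [natDegree_comp, hf1, one_mul]
  · exact (hf.comp_self h2).irreducible

/-- If `f ∈ ℚ[x]` is `p^r`-Dumas, then `f ∘ f` is irreducible over `ℚ`. -/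
theorem dumas_comp_self_irreducible (p r : ℕ) (hp : p.Prime) (hr : 1 ≤ r)
    (f : Polynomial ℚ) (hf : IsDumas p r f) :
    Irreducible (f.comp f) :=
  dumas_comp_self_irreducible_general p r hp f hf
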